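/- Let a, b, c, d be pairwise distinct vertices. The rigid triangle, i.e. the hypergraph with vertex set {a,b,c,d} and hyperedges {a,b,c}, {b,c,d}, {a,d}, has no segment representation. Likewise, for a fifth distinct vertex f, the hypergraph with vertex set {a,b,c,d,f} and hyperedges {a,b,c}, {b,c,d}, {a,d,f} has no segment representation. -/

import Mathlib

set_option maxRecDepth 8000

abbrev Pt : Type := ℝ × ℝ

def IsLine (L : Set Pt) : Prop :=
  ∃ a b : Pt, a ≠ b ∧ L = (affineSpan ℝ {a, b} : Set Pt)

def IsSegment (S : Set Pt) : Prop :=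
  ∃ a b : Pt, a ≠ b ∧ S = segment ℝ a b

structure HGraph (ι : Type) where
  V : Finset ι
  E : Finset (Finset ι)
  edge_nonempty : ∀ e ∈ E, e.Nonempty
  edge_subset : ∀ e ∈ E, e ⊆ V

structure LineRep {ι : Type} (H : HGraph ι) where
  α : ι → Pt
  β : Finset ι → Set Pt
  α_inj : Set.InjOn α ↑H.V
  β_inj : Set.InjOn β ↑H.E
  β_isLine : ∀ e ∈ H.E, IsLine (β e)
  incidence : ∀ v ∈ H.V, ∀ e ∈ H.E, (v ∈ e ↔ α v ∈ β e)

structure SegmentRep {ι : Type} (H : HGraph ι) where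
  α : ι → Pt
  β : Finset ι → Set Pt
  α_inj : Set.InjOn α ↑H.V
  β_inj : Set.InjOn β ↑H.E
  β_isSegment : ∀ e ∈ H.E, IsSegment (β e)
  incidence : ∀ v ∈ H.V, ∀ e ∈ H.E, (v ∈ e ↔ α v ∈ β e)

def SegmentRep.Strict {ι : Type} {H : HGraph ι} (R : SegmentRep H) : Prop :=
  ∀ e ∈ H.E, ∀ e' ∈ H.E, e ≠ e' → (R.β e ∩ R.β e').Subsingleton

def LineRep.CrossingFree {ι : Type} {H : HGraph ι} (R : LineRep H) : Prop :=
  ∀ e ∈ H.E, ∀ e' ∈ H.E, ((R.β e ∩ R.β e').Nonempty ↔ ∃ v, v ∈ e ∧ v ∈ e')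

def SegmentRep.CrossingFree {ι : Type} {H : HGraph ι} (R : SegmentRep H) : Prop :=
  ∀ e ∈ H.E, ∀ e' ∈ H.E, ((R.β e ∩ R.β e').Nonempty ↔ ∃ v, v ∈ e ∧ v ∈ e')

/-!
Let the segments of `{a,b,c}` and `{b,c,d}` be `S₁` and `S₂`. Both contain the
distinct points `b` and `c`, so `a`, `b`, `d` lie on one line and one of them is between the other
two. If `d` were between `a` and `b` it would lie on `S₁`, and if `a` were between `d` and `b` it
would lie on `S₂`. Hence `b` lies between `a` and `d`, so on every segment through `a` and `d`,
which the third hyperedge forbids.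
-/

section Geometry

variable {E : Type*} [AddCommGroup E] [Module ℝ E]

theorem mem_line_of_mem_segment {p q x y z : E} (hxy : x ≠ y) (hx : x ∈ segment ℝ p q)
    (hy : y ∈ segment ℝ p q) (hz : z ∈ segment ℝ p q) : z ∈ line[ℝ, x, y] := by
  have hline : ∀ w ∈ segment ℝ p q, w ∈ line[ℝ, p, q] :=
    fun w hw => (mem_segment_iff_wbtw.mp hw).mem_affineSpan
  exact (collinear_triple_of_mem_affineSpan_pair (hline x hx) (hline y hy) (hline z hz))
    |>.mem_affineSpan_of_mem_of_ne (by simp) (by simp) (by simp) hxy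

theorem wbtw_of_convex_of_collinear {S₁ S₂ : Set E} (hS₁ : Convex ℝ S₁) (hS₂ : Convex ℝ S₂)
    {a b d : E} (hcol : Collinear ℝ {a, b, d}) (ha₁ : a ∈ S₁) (hb₁ : b ∈ S₁) (hd₁ : d ∉ S₁)
    (hb₂ : b ∈ S₂) (hd₂ : d ∈ S₂) (ha₂ : a ∉ S₂) : Wbtw ℝ a b d := by
  rcases hcol.wbtw_or_wbtw_or_wbtw with h | h | h
  · exact h
  · exact absurd (hS₁.mem_of_wbtw h hb₁ ha₁) hd₁
  · exact absurd (hS₂.mem_of_wbtw h hd₂ hb₂) ha₂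

end Geometry

theorem IsSegment.convex {S : Set Pt} (hS : IsSegment S) : Convex ℝ S := by
  obtain ⟨p, q, -, rfl⟩ := hS
  exact convex_segment p q

theorem IsSegment.mem_line {S : Set Pt} (hS : IsSegment S) {x y z : Pt} (hxy : x ≠ y)
    (hx : x ∈ S) (hy : y ∈ S) (hz : z ∈ S) : z ∈ line[ℝ, x, y] := by
  obtain ⟨p, q, -, rfl⟩ := hS
  exact mem_line_of_mem_segment hxy hx hy hz

namespace SegmentRep

variable {ι : Type} {H : HGraph ι}

theorem α_mem_β (R : SegmentRep H) {v : ι} {e : Finset ι} (he : e ∈ H.E) (hv : v ∈ e) : R.α v ∈ R.β e :=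
  (R.incidence v (H.edge_subset e he hv) e he).mp hv

theorem α_notMem_β (R : SegmentRep H) {v : ι} {e : Finset ι} (hvV : v ∈ H.V) (he : e ∈ H.E) (hv : v ∉ e) :
    R.α v ∉ R.β e :=
  fun h => hv ((R.incidence v hvV e he).mpr h)

theorem mem_of_rigid_triangle (R : SegmentRep H) {a b c d : ι} {e₁ e₂ e₃ : Finset ι}
    (he₁ : e₁ ∈ H.E) (he₂ : e₂ ∈ H.E) (he₃ : e₃ ∈ H.E)
    (ha₁ : a ∈ e₁) (hb₁ : b ∈ e₁) (hc₁ : c ∈ e₁) (hb₂ : b ∈ e₂) (hc₂ : c ∈ e₂) (hd₂ : d ∈ e₂)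
    (ha₃ : a ∈ e₃) (hd₃ : d ∈ e₃) (ha₂ : a ∉ e₂) (hd₁ : d ∉ e₁) (hbc : b ≠ c) : b ∈ e₃ := by
  have hαbc : R.α b ≠ R.α c := fun h =>
    hbc (R.α_inj (H.edge_subset e₁ he₁ hb₁) (H.edge_subset e₁ he₁ hc₁) h)
  have hS₁ := R.β_isSegment e₁ he₁
  have hS₂ := R.β_isSegment e₂ he₂
  have hcol : Collinear ℝ {R.α a, R.α b, R.α d} :=
    collinear_triple_of_mem_affineSpan_pair
      (hS₁.mem_line hαbc (R.α_mem_β he₁ hb₁) (R.α_mem_β he₁ hc₁) (R.α_mem_β he₁ ha₁))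
      (left_mem_affineSpan_pair ℝ _ _)
      (hS₂.mem_line hαbc (R.α_mem_β he₂ hb₂) (R.α_mem_β he₂ hc₂) (R.α_mem_β he₂ hd₂))
  have hbtw : Wbtw ℝ (R.α a) (R.α b) (R.α d) :=
    wbtw_of_convex_of_collinear hS₁.convex hS₂.convex hcol
      (R.α_mem_β he₁ ha₁) (R.α_mem_β he₁ hb₁) (R.α_notMem_β (H.edge_subset e₂ he₂ hd₂) he₁ hd₁)
      (R.α_mem_β he₂ hb₂) (R.α_mem_β he₂ hd₂) (R.α_notMem_β (H.edge_subset e₁ he₁ ha₁) he₂ ha₂)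
  have hb₃ : R.α b ∈ R.β e₃ :=
    (R.β_isSegment e₃ he₃).convex.mem_of_wbtw hbtw (R.α_mem_β he₃ ha₃) (R.α_mem_β he₃ hd₃)
  exact (R.incidence b (H.edge_subset e₁ he₁ hb₁) e₃ he₃).mpr hb₃

end SegmentRep

theorem not_nonempty_segmentRep_of_rigid_triangle {ι : Type} [DecidableEq ι] {H : HGraph ι}
    {a b c d : ι} {e : Finset ι} (habc : {a, b, c} ∈ H.E) (hbcd : {b, c, d} ∈ H.E)
    (he : e ∈ H.E) (hae : a ∈ e) (hde : d ∈ e) (hbe : b ∉ e)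
    (hab : a ≠ b) (hac : a ≠ c) (had : a ≠ d) (hbc : b ≠ c) (hbd : b ≠ d) (hcd : c ≠ d) :
    ¬ Nonempty (SegmentRep H) := by
  rintro ⟨R⟩
  refine hbe (R.mem_of_rigid_triangle habc hbcd he (by simp) (by simp) (by simp) (by simp)
    (by simp) (by simp) hae hde ?_ ?_ hbc)
  · simp [hab, hac, had]
  · simp [had.symm, hbd.symm, hcd.symm]

theorem stmt8 {ι : Type} [DecidableEq ι] :
    (∀ a b c d : ι, [a, b, c, d].Pairwise (· ≠ ·) →
      ∀ H : HGraph ι, H.V = {a, b, c, d} →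
        H.E = {({a, b, c} : Finset ι), {b, c, d}, {a, d}} →
        ¬ Nonempty (SegmentRep H)) ∧
    (∀ a b c d f : ι, [a, b, c, d, f].Pairwise (· ≠ ·) →
      ∀ H : HGraph ι, H.V = {a, b, c, d, f} →
        H.E = {({a, b, c} : Finset ι), {b, c, d}, {a, d, f}} →
        ¬ Nonempty (SegmentRep H)) := by
  constructor
  · intro a b c d hpair H _ hE
    simp only [List.pairwise_cons, List.mem_cons, List.not_mem_nil, or_false,
      forall_eq_or_imp, forall_eq] at hpair
    obtain ⟨⟨hab, hac, had⟩, ⟨hbc, hbd⟩, hcd, -⟩ := hpair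
    exact not_nonempty_segmentRep_of_rigid_triangle (e := {a, d}) (by simp [hE]) (by simp [hE])
      (by simp [hE]) (by simp) (by simp) (by simp [hab.symm, hbd]) hab hac had hbc hbd hcd
  · intro a b c d f hpair H _ hE
    simp only [List.pairwise_cons, List.mem_cons, List.not_mem_nil, or_false,
      forall_eq_or_imp, forall_eq] at hpair
    obtain ⟨⟨hab, hac, had, -⟩, ⟨hbc, hbd, hbf⟩, ⟨hcd, -⟩, -, -⟩ := hpair
    exact not_nonempty_segmentRep_of_rigid_triangle (e := {a, d, f}) (by simp [hE])
      (by simp [hE]) (by simp [hE]) (by simp) (by simp) (by simp [hab.symm, hbd, hbf])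
      hab hac had hbc hbd hcd
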